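/- Let p and q be distinct odd primes, and let (G,γ) be a (ℤ/pℤ × ℤ/qℤ)-colored graph with n vertices and 2n − 1 edges. Then (G,γ) is a cone-Laman graph if and only if its symmetric lift is Laman-sparse. -/

import Mathlib

/-!
Preamble: finite directed multigraphs with edge colors in an abelian group
("colored graphs"), gain groups and ρ-rank, the Ross / cone-Laman /
cylinder-Laman sparsity counts, colored Henneberg moves, undirected
multigraphs, (k,ℓ)-sparsity, uncolored Henneberg moves, and symmetric lifts.
-/

/-- A finite directed multigraph with edge colors in `Γ` (a "Γ-colored graph").
Self-loops and parallel edges are allowed. -/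
structure CMG (Γ : Type) where
  V : Type
  E : Type
  finV : Finite V
  finE : Finite E
  src : E → V
  dst : E → V
  color : E → Γ

attribute [instance] CMG.finV CMG.finE

instance {α : Type*} [Finite α] : Finite (Option α) :=
  Finite.of_equiv _ (Equiv.optionEquivSumPUnit.{0} α).symm

namespace CMG

variable {Γ : Type} [AddCommGroup Γ]

/-- `e` is an edge from `a` to `v` with color `c`, in the oriented sense:
either it is stored as `a → v` with color `c`, or as `v → a` with color `-c`
(reversing an edge while negating its color gives the same colored graph). -/
def IsEdgeFromTo (G : CMG Γ) (e : G.E) (a v : G.V) (c : Γ) : Prop :=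
  (G.src e = a ∧ G.dst e = v ∧ G.color e = c) ∨
    (G.src e = v ∧ G.dst e = a ∧ G.color e = -c)

/-- `e` is incident to the vertex `v`. -/
def Incident (G : CMG Γ) (e : G.E) (v : G.V) : Prop :=
  G.src e = v ∨ G.dst e = v

/-- `e` is a self-loop at `v`. -/
def IsLoopAt (G : CMG Γ) (e : G.E) (v : G.V) : Prop :=
  G.src e = v ∧ G.dst e = v

/-- The vertices of the edge-induced subgraph on the edge set `F`. -/
def vertsIn (G : CMG Γ) (F : Set G.E) : Set G.V :=
  {v | ∃ e ∈ F, G.Incident e v}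

/-- `Walk G F u w γ`: there is a walk inside the edge set `F` from `u` to `w`
whose signed color sum (colors of forward-traversed edges added, colors of
backward-traversed edges subtracted) is `γ`. -/
inductive Walk (G : CMG Γ) (F : Set G.E) : G.V → G.V → Γ → Prop
  | nil (v : G.V) : Walk G F v v 0
  | fwd {x : G.V} {γ : Γ} (e : G.E) (he : e ∈ F) (hw : Walk G F (G.dst e) x γ) :
      Walk G F (G.src e) x (G.color e + γ)
  | bwd {x : G.V} {γ : Γ} (e : G.E) (he : e ∈ F) (hw : Walk G F (G.src e) x γ) :
      Walk G F (G.dst e) x (-G.color e + γ)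

/-- `u` and `w` are joined by a walk in the edge set `F`. -/
def Reaches (G : CMG Γ) (F : Set G.E) (u w : G.V) : Prop :=
  ∃ γ, G.Walk F u w γ

/-- The connected component of `v` in the edge set `F`. -/
def comp (G : CMG Γ) (F : Set G.E) (v : G.V) : Set G.V :=
  {w | G.Reaches F v w}

/-- The gain group (ρ-image) of the edge set `F` based at the vertex `v`:
the subgroup of `Γ` generated by the signed color sums of closed walks at `v`. -/
def gainGroup (G : CMG Γ) (F : Set G.E) (v : G.V) : AddSubgroup Γ :=
  AddSubgroup.closure {γ | G.Walk F v v γ}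

/-- The ρ-image of the whole edge set `F` (over all base vertices). -/
def totalGain (G : CMG Γ) (F : Set G.E) : AddSubgroup Γ :=
  AddSubgroup.closure {γ | ∃ v, G.Walk F v v γ}

end CMG

/-- The rank of a subgroup of an abelian group: the minimal cardinality of a
finite generating set. -/
noncomputable def subgroupRank {Γ : Type} [AddCommGroup Γ] (H : AddSubgroup Γ) : ℕ :=
  sInf {n | ∃ s : Finset Γ, s.card = n ∧ AddSubgroup.closure (s : Set Γ) = H}

namespace CMG

variable {Γ : Type} [AddCommGroup Γ]

/-- The number of connected components of the edge-induced subgraph on `F`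
whose ρ-rank is `i`. -/
noncomputable def compCount (G : CMG Γ) (F : Set G.E) (i : ℕ) : ℕ :=
  Set.ncard {S : Set G.V |
    ∃ v ∈ G.vertsIn F, S = G.comp F v ∧ subgroupRank (G.gainGroup F v) = i}

/-- The number of connected components of the whole graph (all vertices,
all edges) whose ρ-rank is `i`. -/
noncomputable def compCountTop (G : CMG Γ) (i : ℕ) : ℕ :=
  Set.ncard {S : Set G.V |
    ∃ v : G.V, S = G.comp Set.univ v ∧ subgroupRank (G.gainGroup Set.univ v) = i}

/-- The Ross count `m' ≤ 2n' - 3c₀' - 2(c₁' + c₂')` for one edge set. -/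
def RossCount (G : CMG Γ) (F : Set G.E) : Prop :=
  (F.ncard : ℤ) ≤ 2 * (G.vertsIn F).ncard - 3 * G.compCount F 0
    - 2 * (G.compCount F 1 + G.compCount F 2)

/-- Ross sparsity: the Ross count holds for every edge-induced subgraph. -/
def IsRossSparse (G : CMG Γ) : Prop :=
  ∀ F : Set G.E, G.RossCount F

/-- A Ross graph: Ross-sparse and the count holds with equality on the whole
graph. -/
def IsRossGraph (G : CMG Γ) : Prop :=
  G.IsRossSparse ∧
    (Nat.card G.E : ℤ) = 2 * Nat.card G.V - 3 * G.compCountTop 0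
      - 2 * (G.compCountTop 1 + G.compCountTop 2)

/-- The cone-Laman count `m' ≤ 2n' - 3c₀' - c₁' - c₂'` for one edge set. -/
def ConeLamanCount (G : CMG Γ) (F : Set G.E) : Prop :=
  (F.ncard : ℤ) ≤ 2 * (G.vertsIn F).ncard - 3 * G.compCount F 0
    - G.compCount F 1 - G.compCount F 2

/-- Cone-Laman sparsity. -/
def IsConeLamanSparse (G : CMG Γ) : Prop :=
  ∀ F : Set G.E, G.ConeLamanCount F

/-- A cone-Laman graph: cone-Laman-sparse with equality on the whole graph. -/
def IsConeLaman (G : CMG Γ) : Prop :=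
  G.IsConeLamanSparse ∧
    (Nat.card G.E : ℤ) = 2 * Nat.card G.V - 3 * G.compCountTop 0
      - G.compCountTop 1 - G.compCountTop 2

/-- The cylinder-Laman count `m' ≤ 2n' + r - 3c₀' - 2(c₁' + c₂')`. -/
def CylinderLamanCount (G : CMG Γ) (F : Set G.E) : Prop :=
  (F.ncard : ℤ) ≤ 2 * (G.vertsIn F).ncard + subgroupRank (G.totalGain F)
    - 3 * G.compCount F 0 - 2 * (G.compCount F 1 + G.compCount F 2)

/-- Cylinder-Laman sparsity. -/
def IsCylinderLamanSparse (G : CMG Γ) : Prop :=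
  ∀ F : Set G.E, G.CylinderLamanCount F

/-- A cylinder-Laman graph: cylinder-Laman-sparse with equality on the whole
graph. -/
def IsCylinderLaman (G : CMG Γ) : Prop :=
  G.IsCylinderLamanSparse ∧
    (Nat.card G.E : ℤ) = 2 * Nat.card G.V + subgroupRank (G.totalGain Set.univ)
      - 3 * G.compCountTop 0 - 2 * (G.compCountTop 1 + G.compCountTop 2)

/-- Isomorphism of colored graphs; an edge may be reversed provided its color
is negated (which represents the same colored graph). -/
def Iso (G H : CMG Γ) : Prop :=
  ∃ (fv : G.V ≃ H.V) (fe : G.E ≃ H.E), ∀ e : G.E,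
    (H.src (fe e) = fv (G.src e) ∧ H.dst (fe e) = fv (G.dst e) ∧
      H.color (fe e) = G.color e) ∨
    (H.src (fe e) = fv (G.dst e) ∧ H.dst (fe e) = fv (G.src e) ∧
      H.color (fe e) = -G.color e)

/-- Delete a vertex and all edges incident to it. -/
def deleteVertex (G : CMG Γ) (v : G.V) : CMG Γ where
  V := {w : G.V // w ≠ v}
  E := {e : G.E // G.src e ≠ v ∧ G.dst e ≠ v}
  finV := inferInstance
  finE := inferInstance
  src := fun e => ⟨G.src e.1, e.2.1⟩
  dst := fun e => ⟨G.dst e.1, e.2.2⟩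
  color := fun e => G.color e.1

/-- Add a single new directed edge from `x` to `y` with color `c`. -/
def addEdge (G : CMG Γ) (x y : G.V) (c : Γ) : CMG Γ where
  V := G.V
  E := Option G.E
  finV := inferInstance
  finE := inferInstance
  src := fun e => e.elim x G.src
  dst := fun e => e.elim y G.dst
  color := fun e => e.elim c G.color

/-- The other endpoint of an edge incident to `v` (junk value on loops). -/
noncomputable def otherEnd (G : CMG Γ) (v : G.V) (e : G.E) : G.V :=
  @ite _ (G.src e = v) (Classical.dec _) (G.dst e) (G.src e)

/-- The color of an edge incident to `v`, read in the direction pointing into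
`v` (junk value on loops). -/
noncomputable def colorInto (G : CMG Γ) (v : G.V) (e : G.E) : Γ :=
  @ite _ (G.dst e = v) (Classical.dec _) (G.color e) (-G.color e)

/-- The colored Henneberg move (H1c): `H` is obtained from `G` by adding one
new vertex `v` and two new edges `av`, `bv` (directed into `v`, which is no
restriction); if `a = b` the two new colors must be distinct. -/
def H1cRel (G H : CMG Γ) : Prop :=
  ∃ (v a b : H.V) (_ : a ≠ v) (_ : b ≠ v) (e₁ e₂ : H.E) (γ₁ γ₂ : Γ),
    e₁ ≠ e₂ ∧
    H.IsEdgeFromTo e₁ a v γ₁ ∧ H.IsEdgeFromTo e₂ b v γ₂ ∧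
    (∀ e, H.Incident e v → e = e₁ ∨ e = e₂) ∧
    (a = b → γ₁ ≠ γ₂) ∧
    Iso G (H.deleteVertex v)

/-- The colored lollipop move (H1c'): `H` is obtained from `G` by adding one
new vertex `v`, one edge `av` with arbitrary color, and one self-loop at `v`
with nonzero color. -/
def H1cpRel (G H : CMG Γ) : Prop :=
  ∃ (v a : H.V) (_ : a ≠ v) (e₁ e₂ : H.E) (γ₁ : Γ),
    e₁ ≠ e₂ ∧
    H.IsEdgeFromTo e₁ a v γ₁ ∧
    H.IsLoopAt e₂ v ∧ H.color e₂ ≠ 0 ∧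
    (∀ e, H.Incident e v → e = e₁ ∨ e = e₂) ∧
    Iso G (H.deleteVertex v)

/-- The colored Henneberg move (H2c): `H` is obtained from `G` by removing an
edge `ab` with color `γ₁ - γ₂`, adding a new vertex `v`, and adding edges
`av`, `bv`, `cv` with colors `γ₁`, `γ₂`, `γ₃` (oriented into `v`, which is no
restriction); parallel new edges must have distinct colors. -/
def H2cRel (G H : CMG Γ) : Prop :=
  ∃ (v a b c : H.V) (ha : a ≠ v) (hb : b ≠ v) (_ : c ≠ v)
      (e₁ e₂ e₃ : H.E) (γ₁ γ₂ γ₃ : Γ),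
    e₁ ≠ e₂ ∧ e₁ ≠ e₃ ∧ e₂ ≠ e₃ ∧
    H.IsEdgeFromTo e₁ a v γ₁ ∧ H.IsEdgeFromTo e₂ b v γ₂ ∧
    H.IsEdgeFromTo e₃ c v γ₃ ∧
    (∀ e, H.Incident e v → e = e₁ ∨ e = e₂ ∨ e = e₃) ∧
    (a = b → γ₁ ≠ γ₂) ∧ (a = c → γ₁ ≠ γ₃) ∧ (b = c → γ₂ ≠ γ₃) ∧
    Iso G ((H.deleteVertex v).addEdge ⟨a, ha⟩ ⟨b, hb⟩ (γ₁ - γ₂))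

/-- The base graph for Ross graphs: two vertices joined by two parallel
directed edges with distinct colors. -/
def IsRossBase (G : CMG Γ) : Prop :=
  ∃ (u v : G.V) (e₁ e₂ : G.E) (γ₁ γ₂ : Γ),
    u ≠ v ∧ e₁ ≠ e₂ ∧
    (∀ w : G.V, w = u ∨ w = v) ∧ (∀ e : G.E, e = e₁ ∨ e = e₂) ∧
    G.IsEdgeFromTo e₁ u v γ₁ ∧ G.IsEdgeFromTo e₂ u v γ₂ ∧ γ₁ ≠ γ₂

/-- The base graph for cone-Laman and cylinder-Laman graphs: a single vertex
with one self-loop carrying a nonzero color. -/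
def IsLoopBase (G : CMG Γ) : Prop :=
  ∃ (v : G.V) (e : G.E),
    (∀ w : G.V, w = v) ∧ (∀ e' : G.E, e' = e) ∧
    G.IsLoopAt e v ∧ G.color e ≠ 0

/-- `Constructible Base R G`: the colored graph `G` can be produced from a
base graph (a graph satisfying `Base`) by a finite sequence of moves from the
relation `R`. -/
inductive Constructible (Base : CMG Γ → Prop) (R : CMG Γ → CMG Γ → Prop) :
    CMG Γ → Prop
  | base (G : CMG Γ) (h : Base G) : Constructible Base R G
  | step (G H : CMG Γ) (hG : Constructible Base R G) (hR : R G H) :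
      Constructible Base R H

/-- The degree of a vertex; a self-loop contributes two. -/
noncomputable def degree (G : CMG Γ) (v : G.V) : ℕ :=
  Nat.card {e : G.E // G.src e = v} + Nat.card {e : G.E // G.dst e = v}

end CMG

/-- Reduce the colors of a `ℤ`-colored graph modulo `p`. -/
def CMG.reduceMod (G : CMG ℤ) (p : ℕ) : CMG (ZMod p) where
  V := G.V
  E := G.E
  finV := G.finV
  finE := G.finE
  src := G.src
  dst := G.dst
  color := fun e => ((G.color e : ℤ) : ZMod p)

/-- An undirected multigraph (possibly infinite), given by the two endpoint
functions of its edges; the orientation of an edge carries no information. -/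
structure UMG where
  V : Type
  E : Type
  fst : E → V
  snd : E → V

namespace UMG

/-- The edge `e` joins `u` and `w`. -/
def Betw (M : UMG) (e : M.E) (u w : M.V) : Prop :=
  (M.fst e = u ∧ M.snd e = w) ∨ (M.fst e = w ∧ M.snd e = u)

/-- `e` is incident to `v`. -/
def Incident (M : UMG) (e : M.E) (v : M.V) : Prop :=
  M.fst e = v ∨ M.snd e = v

/-- `e` is a self-loop. -/
def IsLoop (M : UMG) (e : M.E) : Prop :=
  M.fst e = M.snd e

/-- The vertices of the edge-induced subgraph on the edge set `F`. -/
def uverts (M : UMG) (F : Set M.E) : Set M.V :=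
  {v | ∃ e ∈ F, M.Incident e v}

/-- `(k,ℓ)`-sparsity: every (finite, nonempty) edge-induced subgraph with `n'`
vertices and `m'` edges satisfies `m' ≤ k n' - ℓ`. -/
def Sparse (M : UMG) (k ℓ : ℤ) : Prop :=
  ∀ F : Set M.E, F.Finite → F.Nonempty →
    (F.ncard : ℤ) ≤ k * (M.uverts F).ncard - ℓ

/-- Laman-sparse means `(2,3)`-sparse. -/
def LamanSparse (M : UMG) : Prop :=
  M.Sparse 2 3

/-- `F` is a (finite, nonempty) violation of the Laman count. -/
def ViolatesLaman (M : UMG) (F : Set M.E) : Prop :=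
  F.Finite ∧ F.Nonempty ∧ ¬ ((F.ncard : ℤ) ≤ 2 * (M.uverts F).ncard - 3)

/-- A Laman-circuit: an edge-minimal violation of Laman sparsity. -/
def LamanCircuit (M : UMG) (C : Set M.E) : Prop :=
  M.ViolatesLaman C ∧ ∀ F : Set M.E, F ⊂ C → ¬ M.ViolatesLaman F

/-- Connectivity inside an edge set. -/
def Reaches (M : UMG) (F : Set M.E) : M.V → M.V → Prop :=
  Relation.ReflTransGen (fun u w => ∃ e ∈ F, M.Betw e u w)

/-- The edge-induced subgraph on `F` is connected. -/
def ConnectedOn (M : UMG) (F : Set M.E) : Prop :=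
  ∀ u ∈ M.uverts F, ∀ w ∈ M.uverts F, M.Reaches F u w

/-- The induced sub-multigraph on a set of vertices. -/
def induce (M : UMG) (W : Set M.V) : UMG where
  V := W
  E := {e : M.E // M.fst e ∈ W ∧ M.snd e ∈ W}
  fst := fun e => ⟨M.fst e.1, e.2.1⟩
  snd := fun e => ⟨M.snd e.1, e.2.2⟩

/-- Delete a vertex and all edges incident to it. -/
def deleteVertex (M : UMG) (v : M.V) : UMG :=
  M.induce {w | w ≠ v}

/-- Add a single new edge joining `x` and `y`. -/
def addEdge (M : UMG) (x y : M.V) : UMG where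
  V := M.V
  E := Option M.E
  fst := fun e => e.elim x M.fst
  snd := fun e => e.elim y M.snd

/-- Add a family of new edges indexed by `I`. -/
def addEdges (M : UMG) (I : Type) (x y : I → M.V) : UMG where
  V := M.V
  E := M.E ⊕ I
  fst := Sum.elim M.fst x
  snd := Sum.elim M.snd y

/-- Isomorphism of undirected multigraphs. -/
def Iso (M N : UMG) : Prop :=
  ∃ (fv : M.V ≃ N.V) (fe : M.E ≃ N.E), ∀ e : M.E,
    (N.fst (fe e) = fv (M.fst e) ∧ N.snd (fe e) = fv (M.snd e)) ∨
    (N.fst (fe e) = fv (M.snd e) ∧ N.snd (fe e) = fv (M.fst e))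

/-- The other endpoint of an edge incident to `v` (junk value on loops). -/
noncomputable def otherEnd (M : UMG) (v : M.V) (e : M.E) : M.V :=
  @ite _ (M.fst e = v) (Classical.dec _) (M.snd e) (M.fst e)

/-- The uncolored Henneberg move (H1), adding the vertex `w`: `N` is obtained
from `M` by adding the new vertex `w` together with two edges joining `w` to
the old graph. -/
def H1At (M N : UMG) (w : N.V) : Prop :=
  (∃ e₁ e₂ : N.E, e₁ ≠ e₂ ∧ N.Incident e₁ w ∧ N.Incident e₂ w ∧
      ¬ N.IsLoop e₁ ∧ ¬ N.IsLoop e₂ ∧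
      ∀ e, N.Incident e w → e = e₁ ∨ e = e₂) ∧
    Iso (N.deleteVertex w) M

/-- The uncolored Henneberg move (H2), splitting an edge between `x` and `y`
and adding the new degree-three vertex `w`: `N` is obtained from `M` by
removing an edge joining `x` and `y` and adding the new vertex `w` together
with edges from `w` to `x`, `y` and some third vertex `z`. -/
def H2SplitAt (M N : UMG) (w x y : N.V) : Prop :=
  (∃ e₁ e₂ e₃ : N.E, e₁ ≠ e₂ ∧ e₁ ≠ e₃ ∧ e₂ ≠ e₃ ∧
      N.Betw e₁ x w ∧ N.Betw e₂ y w ∧ (∃ z, z ≠ w ∧ N.Betw e₃ z w) ∧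
      ∀ e, N.Incident e w → e = e₁ ∨ e = e₂ ∨ e = e₃) ∧
    ∃ (hx : x ≠ w) (hy : y ≠ w),
      Iso ((N.deleteVertex w).addEdge ⟨x, hx⟩ ⟨y, hy⟩) M

/-- The uncolored Henneberg move (H2). -/
def H2Rel (M N : UMG) : Prop :=
  ∃ w x y : N.V, H2SplitAt M N w x y

/-- `(2,2)`-spanning: the graph contains a spanning `(2,2)`-graph. -/
def Spanning22 (M : UMG) : Prop :=
  ∃ F : Set M.E, F.Finite ∧
    (∀ F' : Set M.E, F' ⊆ F → F'.Nonempty →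
      (F'.ncard : ℤ) ≤ 2 * (M.uverts F').ncard - 2) ∧
    (F.ncard : ℤ) = 2 * Nat.card M.V - 2

end UMG

namespace CMG

variable {Γ : Type} [AddCommGroup Γ]

/-- The symmetric lift of a `Γ`-colored graph: vertices `V × Γ`, and each
directed edge `ij` of color `γ` lifts to the edges `{ĩ_δ, j̃_{γ+δ}}`. -/
def liftU (G : CMG Γ) : UMG where
  V := G.V × Γ
  E := G.E × Γ
  fst := fun e => (G.src e.1, e.2)
  snd := fun e => (G.dst e.1, G.color e.1 + e.2)

/-- The lift of an edge set: the union of the fibers over its edges. -/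
def liftEdges (G : CMG Γ) (F : Set G.E) : Set (G.liftU).E :=
  {e | e.1 ∈ F}

/-- The concrete result of the colored Henneberg move (H1c) on `G`, adding a
new vertex `none` and two new edges `a → none`, `b → none` with colors
`γ₁`, `γ₂`. -/
def applyH1c (G : CMG Γ) (a b : G.V) (γ₁ γ₂ : Γ) : CMG Γ where
  V := Option G.V
  E := G.E ⊕ Bool
  finV := inferInstance
  finE := inferInstance
  src := Sum.elim (fun e => some (G.src e)) (fun x => some (cond x b a))
  dst := Sum.elim (fun e => some (G.dst e)) (fun _ => none)
  color := Sum.elim G.color (fun x => cond x γ₂ γ₁)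

/-- The concrete result of the colored Henneberg move (H2c) on `G`: the edge
`f` (from `a := src f` to `b := dst f`) is removed, a new vertex `none` is
added, and edges `a → none`, `b → none`, `c → none` with colors `γ₁`, `γ₂`,
`γ₃` are added. -/
def applyH2c (G : CMG Γ) (f : G.E) (c : G.V) (γ₁ γ₂ γ₃ : Γ) : CMG Γ where
  V := Option G.V
  E := {e : G.E // e ≠ f} ⊕ Fin 3
  finV := inferInstance
  finE := inferInstance
  src := Sum.elim (fun e => some (G.src e.1))
    (fun i => ![some (G.src f), some (G.dst f), some c] i)
  dst := Sum.elim (fun e => some (G.dst e.1)) (fun _ => none)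
  color := Sum.elim (fun e => G.color e.1) (fun i => ![γ₁, γ₂, γ₃] i)

/-- The intermediate uncolored graphs between the lift of `G` and the lift of
`applyH1c G a b γ₁ γ₂`: only the new vertices `ṽ_δ` with `δ ∈ S` (and their
incident edges) are present. -/
def h1cPartial (G : CMG Γ) (a b : G.V) (γ₁ γ₂ : Γ) (S : Set Γ) : UMG :=
  (CMG.liftU (G.applyH1c a b γ₁ γ₂)).induce {w | w.1 ≠ none ∨ w.2 ∈ S}

/-- The intermediate uncolored graphs between the lift of `G` and the lift of
`applyH2c G f c γ₁ γ₂ γ₃`: only the new vertices `ṽ_δ` with `δ ∈ S` (and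
their incident edges) are present, and for `δ ∉ S` the not-yet-split fiber
edge of `f` with endpoints `ã_{δ-γ₁}`, `b̃_{δ-γ₂}` is still present. -/
def h2cPartial (G : CMG Γ) (f : G.E) (c : G.V) (γ₁ γ₂ γ₃ : Γ) (S : Set Γ) :
    UMG :=
  UMG.addEdges
    ((CMG.liftU (G.applyH2c f c γ₁ γ₂ γ₃)).induce {w | w.1 ≠ none ∨ w.2 ∈ S})
    {δ : Γ // δ ∉ S}
    (fun δ => ⟨(some (G.src f), δ.1 - γ₁), Or.inl (by exact Option.some_ne_none _)⟩)
    (fun δ => ⟨(some (G.dst f), δ.1 - γ₂), Or.inl (by exact Option.some_ne_none _)⟩)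

end CMG

/-!
Write `f(F) = 2n' - m'` for a set `F` of edges. If `F` is connected with gain group `K`, its lift
consists of translates of one component `W`, which covers `F` with `|K|` sheets, so
`f(W) = |K| f(F)`. As `|Γ| = pq` is odd, `|K|` is `1` when `K` is trivial and at least `3`
otherwise; hence the Laman count `f(W) ≥ 3` gives the cone-Laman count for `F` (`f(F) ≥ 3`,
resp. `f(F) ≥ 1`), and the cone-Laman count only has to be checked on connected edge sets.
Conversely, a Laman circuit `C` of the lift is connected, `(2,2)`-sparse and has `f(C) = 2`; the
component `W` containing it is a connected union of translates of `C`, so `f(W) ≤ 2`, which the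
cone-Laman count for the projection of `C` forbids.
All ρ-ranks are at most `1` because `ℤ/p × ℤ/q` is cyclic, and then `m = 2n - 1` forces the
cone-Laman count of the whole graph to be an equality.
-/

section SubgroupRank

variable {Γ : Type} [AddCommGroup Γ]

lemma subgroupRank_le_card {K : AddSubgroup Γ} (s : Finset Γ)
    (h : AddSubgroup.closure (s : Set Γ) = K) : subgroupRank K ≤ s.card :=
  Nat.sInf_le ⟨s, rfl, h⟩

lemma subgroupRank_eq_zero_iff [Finite Γ] {K : AddSubgroup Γ} : subgroupRank K = 0 ↔ K = ⊥ := by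
  constructor
  · intro h
    have hne : {n | ∃ s : Finset Γ, s.card = n ∧ AddSubgroup.closure (s : Set Γ) = K}.Nonempty :=
      ⟨_, (Set.toFinite (K : Set Γ)).toFinset, rfl, by simp⟩
    obtain ⟨s, hs, hK⟩ : subgroupRank K ∈ _ := Nat.sInf_mem hne
    simpa [Finset.card_eq_zero.mp (hs.trans h)] using hK.symm
  · rintro rfl
    exact Nat.le_zero.mp (subgroupRank_le_card ∅ (by simp))

lemma subgroupRank_le_one [IsAddCyclic Γ] (K : AddSubgroup Γ) : subgroupRank K ≤ 1 := by
  obtain ⟨g, hg⟩ := (AddSubgroup.isAddCyclic_iff_exists_zmultiples_eq_top K).mp inferInstance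
  exact subgroupRank_le_card {g} (by simpa [AddSubgroup.zmultiples_eq_closure] using hg)

lemma three_le_card_of_ne_bot (hodd : Odd (Nat.card Γ)) {K : AddSubgroup Γ} (hK : K ≠ ⊥) :
    3 ≤ Nat.card K := by
  obtain ⟨k, hk⟩ := Odd.of_dvd_nat hodd K.card_addSubgroup_dvd_card
  have : Nat.card K ≠ 1 := fun h => hK (AddSubgroup.card_eq_one.mp h)
  omega

end SubgroupRank

namespace CMG

variable {Γ : Type} [AddCommGroup Γ] {G : CMG Γ} {F : Set G.E}

lemma Walk.cast {u w : G.V} {γ γ' : Γ} (hw : G.Walk F u w γ) (h : γ = γ') :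
    G.Walk F u w γ' :=
  h ▸ hw

lemma Walk.mono {F' : Set G.E} (h : F ⊆ F') {u w : G.V} {γ : Γ}
    (hw : G.Walk F u w γ) : G.Walk F' u w γ := by
  induction hw with
  | nil v => exact .nil v
  | fwd e he _ ih => exact .fwd e (h he) ih
  | bwd e he _ ih => exact .bwd e (h he) ih

lemma Walk.append {u v w : G.V} {γ γ' : Γ} (h₁ : G.Walk F u v γ) (h₂ : G.Walk F v w γ') :
    G.Walk F u w (γ + γ') := by
  induction h₁ with
  | nil v => exact h₂.cast (zero_add γ').symm
  | fwd e he _ ih => exact (Walk.fwd e he (ih h₂)).cast (add_assoc _ _ _).symm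
  | bwd e he _ ih => exact (Walk.bwd e he (ih h₂)).cast (add_assoc _ _ _).symm

lemma Walk.edge {e : G.E} (he : e ∈ F) : G.Walk F (G.src e) (G.dst e) (G.color e) :=
  (Walk.fwd e he (.nil _)).cast (add_zero _)

lemma Walk.edge_rev {e : G.E} (he : e ∈ F) : G.Walk F (G.dst e) (G.src e) (-G.color e) :=
  (Walk.bwd e he (.nil _)).cast (add_zero _)

lemma Walk.reverse {u v : G.V} {γ : Γ} (h : G.Walk F u v γ) : G.Walk F v u (-γ) := by
  induction h with
  | nil v => exact (Walk.nil v).cast neg_zero.symm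
  | fwd e he _ ih => exact (ih.append (Walk.edge_rev he)).cast (by abel)
  | bwd e he _ ih => exact (ih.append (Walk.edge he)).cast (by abel)

lemma Walk.eq_or_mem_vertsIn {v w : G.V} {γ : Γ} (h : G.Walk F v w γ) :
    w = v ∨ w ∈ G.vertsIn F := by
  induction h with
  | nil v => exact Or.inl rfl
  | fwd e he _ ih => exact Or.inr (ih.elim (fun h => ⟨e, he, Or.inr h.symm⟩) id)
  | bwd e he _ ih => exact Or.inr (ih.elim (fun h => ⟨e, he, Or.inl h.symm⟩) id)

lemma Reaches.refl (F : Set G.E) (v : G.V) : G.Reaches F v v := ⟨0, .nil v⟩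

lemma Reaches.symm {u v : G.V} (h : G.Reaches F u v) : G.Reaches F v u :=
  let ⟨_, hγ⟩ := h; ⟨_, hγ.reverse⟩

lemma Reaches.trans {u v w : G.V} (h₁ : G.Reaches F u v) (h₂ : G.Reaches F v w) :
    G.Reaches F u w :=
  let ⟨_, hγ⟩ := h₁; let ⟨_, hγ'⟩ := h₂; ⟨_, hγ.append hγ'⟩

lemma reaches_src_dst {e : G.E} (he : e ∈ F) : G.Reaches F (G.src e) (G.dst e) :=
  ⟨_, Walk.edge he⟩

lemma comp_eq_of_reaches {v w : G.V} (h : G.Reaches F v w) : G.comp F w = G.comp F v :=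
  Set.ext fun _ => ⟨h.trans, h.symm.trans⟩

lemma mem_gainGroup {v : G.V} {γ : Γ} : γ ∈ G.gainGroup F v ↔ G.Walk F v v γ :=
  ⟨fun h => AddSubgroup.closure_induction (fun _ hx => hx) (.nil v)
    (fun _ _ _ _ h₁ h₂ => h₁.append h₂) (fun _ _ h => h.reverse) h,
   fun h => AddSubgroup.subset_closure h⟩

lemma walk_iff_sub_mem_gainGroup {v w : G.V} {α γ : Γ} (hα : G.Walk F v w α) :
    G.Walk F v w γ ↔ γ - α ∈ G.gainGroup F v := by
  rw [mem_gainGroup]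
  exact ⟨fun h => (h.append hα.reverse).cast (sub_eq_add_neg γ α).symm,
    fun h => (h.append hα).cast (sub_add_cancel γ α)⟩

lemma gainGroup_eq_of_reaches {v w : G.V} (h : G.Reaches F v w) :
    G.gainGroup F w = G.gainGroup F v := by
  obtain ⟨α, hα⟩ := h
  ext γ
  simp only [mem_gainGroup]
  exact ⟨fun hγ => ((hα.append hγ).append hα.reverse).cast (by abel),
    fun hγ => ((hα.reverse.append hγ).append hα).cast (by abel)⟩

variable (G) in
def IsConnectedFrom (F : Set G.E) (v₀ : G.V) : Prop :=
  ∀ e ∈ F, G.Reaches F v₀ (G.src e)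

lemma comp_eq_vertsIn {v₀ : G.V} (hv₀ : v₀ ∈ G.vertsIn F) (hconn : G.IsConnectedFrom F v₀) :
    G.comp F v₀ = G.vertsIn F := by
  ext w
  constructor
  · rintro ⟨γ, hγ⟩
    exact hγ.eq_or_mem_vertsIn.elim (· ▸ hv₀) id
  · rintro ⟨e, he, rfl | rfl⟩
    · exact hconn e he
    · exact (hconn e he).trans (reaches_src_dst he)

lemma compCount_of_isConnectedFrom {v₀ : G.V} (hv₀ : v₀ ∈ G.vertsIn F)
    (hconn : G.IsConnectedFrom F v₀) (i : ℕ) :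
    G.compCount F i = if subgroupRank (G.gainGroup F v₀) = i then 1 else 0 := by
  have hreach : ∀ v ∈ G.vertsIn F, G.Reaches F v₀ v := fun v hv => by
    rwa [← comp_eq_vertsIn hv₀ hconn] at hv
  have hset : {S : Set G.V | ∃ v ∈ G.vertsIn F, S = G.comp F v ∧
      subgroupRank (G.gainGroup F v) = i} =
      if subgroupRank (G.gainGroup F v₀) = i then {G.comp F v₀} else ∅ := by
    ext S
    split_ifs with h
    · refine ⟨?_, fun hS => ⟨v₀, hv₀, hS, h⟩⟩
      rintro ⟨v, hv, rfl, -⟩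
      exact comp_eq_of_reaches (hreach v hv)
    · refine ⟨?_, False.elim⟩
      rintro ⟨v, hv, -, hr⟩
      exact h (gainGroup_eq_of_reaches (hreach v hv) ▸ hr)
  rw [compCount, hset]
  split_ifs <;> simp

section Splitting

variable {P : Set G.V} (hP : ∀ e ∈ F, G.src e ∈ P ↔ G.dst e ∈ P)
include hP

lemma Walk.inter_preimage {u w : G.V} {γ : Γ} (h : G.Walk F u w γ) (hu : u ∈ P) :
    G.Walk (F ∩ G.src ⁻¹' P) u w γ := by
  induction h with
  | nil v => exact .nil v
  | fwd e he _ ih => exact .fwd e ⟨he, hu⟩ (ih ((hP e he).1 hu))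
  | bwd e he _ ih => exact .bwd e ⟨he, (hP e he).2 hu⟩ (ih ((hP e he).2 hu))

omit [AddCommGroup Γ] in
lemma vertsIn_inter_preimage : G.vertsIn (F ∩ G.src ⁻¹' P) = G.vertsIn F ∩ P := by
  ext v
  constructor
  · rintro ⟨e, ⟨he, hsrc⟩, rfl | rfl⟩
    exacts [⟨⟨e, he, Or.inl rfl⟩, hsrc⟩, ⟨⟨e, he, Or.inr rfl⟩, (hP e he).1 hsrc⟩]
  · rintro ⟨⟨e, he, rfl | rfl⟩, hv⟩
    exacts [⟨e, ⟨he, hv⟩, Or.inl rfl⟩, ⟨e, ⟨he, (hP e he).2 hv⟩, Or.inr rfl⟩]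

lemma Reaches.mem_of_mem {u w : G.V} (h : G.Reaches F u w) (hu : u ∈ P) : w ∈ P := by
  obtain ⟨γ, hγ⟩ := h
  rcases (hγ.inter_preimage hP hu).eq_or_mem_vertsIn with rfl | hw
  · exact hu
  · exact ((vertsIn_inter_preimage hP).subset hw).2

lemma comp_inter_preimage {v : G.V} (hv : v ∈ P) :
    G.comp (F ∩ G.src ⁻¹' P) v = G.comp F v :=
  Set.ext fun _ => ⟨fun ⟨γ, hγ⟩ => ⟨γ, hγ.mono Set.inter_subset_left⟩,
    fun ⟨γ, hγ⟩ => ⟨γ, hγ.inter_preimage hP hv⟩⟩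

lemma gainGroup_inter_preimage {v : G.V} (hv : v ∈ P) :
    G.gainGroup (F ∩ G.src ⁻¹' P) v = G.gainGroup F v := by
  ext γ
  simp only [mem_gainGroup]
  exact ⟨fun h => h.mono Set.inter_subset_left, fun h => h.inter_preimage hP hv⟩

lemma compCount_inter_preimage (i : ℕ) :
    G.compCount (F ∩ G.src ⁻¹' P) i = Set.ncard {S : Set G.V |
      ∃ v ∈ G.vertsIn F ∩ P, S = G.comp F v ∧ subgroupRank (G.gainGroup F v) = i} := by
  rw [compCount, vertsIn_inter_preimage hP]
  congr 1
  ext S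
  constructor <;> rintro ⟨v, hv, rfl, hr⟩
  · exact ⟨v, hv, comp_inter_preimage hP hv.2, gainGroup_inter_preimage hP hv.2 ▸ hr⟩
  · exact ⟨v, hv, (comp_inter_preimage hP hv.2).symm,
      (gainGroup_inter_preimage hP hv.2).symm ▸ hr⟩

lemma compCount_eq_add (i : ℕ) :
    G.compCount F i =
      G.compCount (F ∩ G.src ⁻¹' P) i + G.compCount (F ∩ G.src ⁻¹' Pᶜ) i := by
  rw [compCount_inter_preimage hP, compCount_inter_preimage (fun e he => not_congr (hP e he)),
    ← Set.ncard_union_eq, compCount]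
  · congr 1
    ext S
    constructor
    · rintro ⟨v, hv, hS⟩
      by_cases hvP : v ∈ P
      exacts [Or.inl ⟨v, ⟨hv, hvP⟩, hS⟩, Or.inr ⟨v, ⟨hv, hvP⟩, hS⟩]
    · rintro (⟨v, hv, hS⟩ | ⟨v, hv, hS⟩)
      exacts [⟨v, hv.1, hS⟩, ⟨v, hv.1, hS⟩]
  · rw [Set.disjoint_left]
    rintro S ⟨v, hv, rfl, -⟩ ⟨w, hw, hvw, -⟩
    have hw' : w ∈ G.comp F v := hvw ▸ Reaches.refl F w
    exact hw.2 ((hw' : G.Reaches F v w).mem_of_mem hP hv.2)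

lemma coneLamanCount_of_inter_preimage (hin : G.ConeLamanCount (F ∩ G.src ⁻¹' P))
    (hout : G.ConeLamanCount (F ∩ G.src ⁻¹' Pᶜ)) : G.ConeLamanCount F := by
  have hE := Set.ncard_inter_add_ncard_sdiff_eq_ncard F (G.src ⁻¹' P)
  have hV := Set.ncard_inter_add_ncard_sdiff_eq_ncard (G.vertsIn F) P
  rw [Set.sdiff_eq, ← Set.preimage_compl] at hE
  rw [Set.sdiff_eq, ← vertsIn_inter_preimage hP,
    ← vertsIn_inter_preimage (fun e he => not_congr (hP e he))] at hV
  unfold ConeLamanCount at *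
  rw [← hE, ← hV, compCount_eq_add hP 0, compCount_eq_add hP 1, compCount_eq_add hP 2]
  push_cast
  linarith

end Splitting

lemma coneLamanCount_empty : G.ConeLamanCount ∅ := by
  simp [ConeLamanCount, compCount, vertsIn]

theorem isConeLamanSparse_of_forall_isConnectedFrom
    (h : ∀ (F : Set G.E) (v₀ : G.V), v₀ ∈ G.vertsIn F → G.IsConnectedFrom F v₀ →
      G.ConeLamanCount F) :
    G.IsConeLamanSparse := by
  intro F
  induction hn : F.ncard using Nat.strong_induction_on generalizing F with
  | _ n ih =>
  rcases F.eq_empty_or_nonempty with rfl | ⟨e₀, he₀⟩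
  · exact coneLamanCount_empty
  by_cases hconn : G.IsConnectedFrom F (G.src e₀)
  · exact h F _ ⟨e₀, he₀, Or.inl rfl⟩ hconn
  obtain ⟨e₁, he₁, hfar⟩ : ∃ e ∈ F, ¬ G.Reaches F (G.src e₀) (G.src e) := by
    simpa [IsConnectedFrom] using hconn
  have hP : ∀ e ∈ F, G.src e ∈ G.comp F (G.src e₀) ↔ G.dst e ∈ G.comp F (G.src e₀) :=
    fun e he => ⟨fun h => h.trans (reaches_src_dst he),
      fun h => h.trans (reaches_src_dst he).symm⟩
  refine coneLamanCount_of_inter_preimage hP (ih _ ?_ _ rfl) (ih _ ?_ _ rfl) <;>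
    refine hn ▸ Set.ncard_lt_ncard ⟨Set.inter_subset_left, fun hsub => ?_⟩ (Set.toFinite F)
  · exact hfar (hsub he₁).2
  · exact (hsub he₀).2 (Reaches.refl F _)

section ConnectedCount

variable {v₀ : G.V}

variable (G) in
noncomputable def freedom (F : Set G.E) : ℤ := 2 * (G.vertsIn F).ncard - F.ncard

open scoped Classical in
lemma coneLamanCount_of_isConnectedFrom [Finite Γ] (hv₀ : v₀ ∈ G.vertsIn F)
    (hconn : G.IsConnectedFrom F v₀)
    (h : (if G.gainGroup F v₀ = ⊥ then 3 else 1) ≤ G.freedom F) : G.ConeLamanCount F := by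
  rw [← subgroupRank_eq_zero_iff] at h
  unfold ConeLamanCount
  unfold freedom at h
  simp only [compCount_of_isConnectedFrom hv₀ hconn]
  split_ifs at h ⊢ <;> push_cast <;> omega

open scoped Classical in
lemma ConeLamanCount.le_freedom_of_isConnectedFrom [Finite Γ]
    (hrank : subgroupRank (G.gainGroup F v₀) ≤ 2) (hv₀ : v₀ ∈ G.vertsIn F)
    (hconn : G.IsConnectedFrom F v₀) (h : G.ConeLamanCount F) :
    (if G.gainGroup F v₀ = ⊥ then 3 else 1) ≤ G.freedom F := by
  rw [← subgroupRank_eq_zero_iff]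
  unfold ConeLamanCount at h
  unfold freedom
  simp only [compCount_of_isConnectedFrom hv₀ hconn] at h
  split_ifs at h ⊢ <;> push_cast at h <;> omega

end ConnectedCount

end CMG

namespace UMG

variable {M : UMG}

variable (M) in
noncomputable def freedom (F : Set M.E) : ℤ := 2 * (M.uverts F).ncard - F.ncard

lemma three_le_freedom_iff {F : Set M.E} :
    3 ≤ M.freedom F ↔ (F.ncard : ℤ) ≤ 2 * (M.uverts F).ncard - 3 := by
  unfold freedom
  omega

lemma Betw.symm {e : M.E} {u w : M.V} (h : M.Betw e u w) : M.Betw e w u :=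
  h.elim Or.inr Or.inl

lemma Betw.incident_left {e : M.E} {u w : M.V} (h : M.Betw e u w) : M.Incident e u :=
  h.elim (fun h => Or.inl h.1) (fun h => Or.inr h.2)

lemma Betw.incident_right {e : M.E} {u w : M.V} (h : M.Betw e u w) : M.Incident e w :=
  h.symm.incident_left

lemma Reaches.symm {F : Set M.E} {u w : M.V} (h : M.Reaches F u w) : M.Reaches F w u := by
  induction h with
  | refl => exact .refl
  | tail _ hstep ih =>
    obtain ⟨e, he, hb⟩ := hstep
    exact .head ⟨e, he, hb.symm⟩ ih

lemma reaches_of_incident {F : Set M.E} {e : M.E} (he : e ∈ F) {u w : M.V}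
    (hu : M.Incident e u) (hw : M.Incident e w) : M.Reaches F u w := by
  have hfst : ∀ {v}, M.Incident e v → M.Reaches F (M.fst e) v := by
    rintro v (rfl | rfl)
    · exact .refl
    · exact .single ⟨e, he, Or.inl ⟨rfl, rfl⟩⟩
  exact (hfst hu).symm.trans (hfst hw)

lemma uverts_mono {F F' : Set M.E} (h : F ⊆ F') : M.uverts F ⊆ M.uverts F' :=
  fun _ ⟨e, he, hv⟩ => ⟨e, h he, hv⟩

lemma uverts_union (A B : Set M.E) : M.uverts (A ∪ B) = M.uverts A ∪ M.uverts B := by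
  ext v
  simp only [uverts, Set.mem_union, Set.mem_ofPred_eq]
  constructor
  · rintro ⟨e, he | he, hv⟩
    exacts [Or.inl ⟨e, he, hv⟩, Or.inr ⟨e, he, hv⟩]
  · rintro (⟨e, he, hv⟩ | ⟨e, he, hv⟩)
    exacts [⟨e, Or.inl he, hv⟩, ⟨e, Or.inr he, hv⟩]

lemma uverts_nonempty {F : Set M.E} (h : F.Nonempty) : (M.uverts F).Nonempty :=
  let ⟨e, he⟩ := h; ⟨M.fst e, e, he, Or.inl rfl⟩

lemma ConnectedOn.uverts_inter_nonempty {X Y : Set M.E} (h : M.ConnectedOn (X ∪ Y))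
    (hX : X.Nonempty) (hY : Y.Nonempty) : (M.uverts X ∩ M.uverts Y).Nonempty := by
  obtain ⟨a, ha⟩ := uverts_nonempty hX
  obtain ⟨b, hb⟩ := uverts_nonempty hY
  have hab := h a (uverts_mono Set.subset_union_left ha) b
    (uverts_mono Set.subset_union_right hb)
  induction hab using Relation.ReflTransGen.head_induction_on with
  | refl => exact ⟨b, ha, hb⟩
  | head hstep _ ih =>
    obtain ⟨e, heX | heY, hbetw⟩ := hstep
    · exact ih ⟨e, heX, hbetw.incident_right⟩
    · exact ⟨_, ha, ⟨e, heY, hbetw.incident_left⟩⟩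

lemma freedom_singleton {e : M.E} (he : ¬ M.IsLoop e) : M.freedom {e} = 3 := by
  have : M.uverts {e} = {M.fst e, M.snd e} := by
    ext v
    simp [uverts, Incident, eq_comm]
  simp [freedom, this, Set.ncard_pair he]

lemma LamanCircuit.freedom_le_two {C : Set M.E} (hC : M.LamanCircuit C) : M.freedom C ≤ 2 := by
  have := hC.1.2.2
  rw [← three_le_freedom_iff] at this
  omega

section Finite

variable [Finite M.E] {C : Set M.E}

lemma exists_lamanCircuit (h : ¬ M.LamanSparse) : ∃ C, M.LamanCircuit C := by
  simp only [LamanSparse, Sparse, not_forall] at h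
  obtain ⟨F, hfin, hne, hviol⟩ := h
  obtain ⟨C, hC⟩ := exists_minimal_of_wellFoundedLT M.ViolatesLaman ⟨F, hfin, hne, hviol⟩
  exact ⟨C, hC.prop, fun F hF hv => hF.2 (hC.le_of_le hv hF.1)⟩

lemma LamanCircuit.three_le_freedom (hC : M.LamanCircuit C) {F : Set M.E} (hF : F ⊂ C)
    (hne : F.Nonempty) : 3 ≤ M.freedom F := by
  by_contra h
  exact hC.2 F hF ⟨Set.toFinite F, hne, by rwa [← three_le_freedom_iff]⟩

variable [Finite M.V]

lemma freedom_union_add (A B : Set M.E) :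
    M.freedom (A ∪ B) + (2 * (M.uverts A ∩ M.uverts B).ncard - (A ∩ B).ncard) =
      M.freedom A + M.freedom B := by
  have hE := Set.ncard_union_add_ncard_inter A B
  have hV := Set.ncard_union_add_ncard_inter (M.uverts A) (M.uverts B)
  rw [← uverts_union] at hV
  unfold freedom
  omega

lemma freedom_union_le {B U : Set M.E} (hB : ∀ F ⊆ B, F.Nonempty → 2 ≤ M.freedom F)
    (hmeet : (M.uverts B ∩ M.uverts U).Nonempty) :
    M.freedom (B ∪ U) ≤ M.freedom B + M.freedom U - 2 := by
  have hcommon : 2 ≤ 2 * ((M.uverts B ∩ M.uverts U).ncard : ℤ) - (B ∩ U).ncard := by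
    rcases (B ∩ U).eq_empty_or_nonempty with h | h
    · have := (Set.ncard_pos (Set.toFinite _)).mpr hmeet
      rw [h, Set.ncard_empty]
      omega
    · have h2 := hB _ Set.inter_subset_left h
      have hsub : M.uverts (B ∩ U) ⊆ M.uverts B ∩ M.uverts U :=
        Set.subset_inter (uverts_mono Set.inter_subset_left) (uverts_mono Set.inter_subset_right)
      have := Set.ncard_le_ncard hsub
      unfold freedom at h2
      omega
  linarith [freedom_union_add B U]

/-- A maximal subfamily whose union has `f ≤ 2` is everything: by connectivity some other piece
shares a vertex with its union, and gluing a piece along a common vertex does not increase `f`. -/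
theorem freedom_biUnion_le {ι : Type*} [Finite ι] {B : ι → Set M.E} {S : Set ι}
    (hS : S.Nonempty) (hne : ∀ i ∈ S, (B i).Nonempty)
    (hsparse : ∀ i ∈ S, ∀ F ⊆ B i, F.Nonempty → 2 ≤ M.freedom F)
    (htight : ∀ i ∈ S, M.freedom (B i) ≤ 2) (hconn : M.ConnectedOn (⋃ i ∈ S, B i)) :
    M.freedom (⋃ i ∈ S, B i) ≤ 2 := by
  obtain ⟨i₀, hi₀⟩ := hS
  obtain ⟨T, ⟨hTS, ⟨t, ht⟩, hT⟩, hmax⟩ := exists_maximal_of_wellFoundedGT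
    (fun T : Set ι => T ⊆ S ∧ T.Nonempty ∧ M.freedom (⋃ i ∈ T, B i) ≤ 2)
    ⟨{i₀}, Set.singleton_subset_iff.mpr hi₀, Set.singleton_nonempty i₀,
      by simpa using htight i₀ hi₀⟩
  obtain rfl | hST := hTS.eq_or_ssubset
  · exact hT
  obtain ⟨j₁, hj₁⟩ := Set.nonempty_of_ssubset hST
  have hsplit : ⋃ i ∈ S, B i = (⋃ i ∈ T, B i) ∪ ⋃ i ∈ S \ T, B i := by
    rw [← Set.biUnion_union, Set.union_sdiff_cancel hTS]
  rw [hsplit] at hconn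
  obtain ⟨v, hvT, e, he, hve⟩ := hconn.uverts_inter_nonempty
    ((hne t (hTS ht)).mono (Set.subset_biUnion_of_mem ht))
    ((hne j₁ hj₁.1).mono (Set.subset_biUnion_of_mem hj₁))
  obtain ⟨j, hj, hej⟩ := Set.mem_iUnion₂.mp he
  refine absurd (hmax ⟨Set.insert_subset hj.1 hTS, Set.insert_nonempty j T, ?_⟩
    (Set.subset_insert j T) (Set.mem_insert j T)) hj.2
  rw [Set.biUnion_insert]
  linarith [freedom_union_le (hsparse j hj.1) ⟨v, ⟨e, hej, hve⟩, hvT⟩, htight j hj.1]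

lemma LamanCircuit.connectedOn (hC : M.LamanCircuit C) : M.ConnectedOn C := by
  intro x ⟨ex, hex, hxinc⟩ y ⟨ey, hey, hyinc⟩
  by_contra hxy
  set A := {e ∈ C | M.Reaches C x (M.fst e)}
  have hnear : ∀ e ∈ A, ∀ v, M.Incident e v → M.Reaches C x v := fun e he v hv =>
    he.2.trans (reaches_of_incident he.1 (Or.inl rfl) hv)
  have hexA : ex ∈ A := ⟨hex, reaches_of_incident hex hxinc (Or.inl rfl)⟩
  have heyA : ey ∈ C \ A := ⟨hey, fun h => hxy (hnear ey h y hyinc)⟩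
  have hdisj : M.uverts A ∩ M.uverts (C \ A) = ∅ := by
    refine Set.eq_empty_of_forall_notMem fun v ⟨⟨e, he, hve⟩, ⟨e', he', hve'⟩⟩ => he'.2 ⟨he'.1, ?_⟩
    exact (hnear e he v hve).trans (reaches_of_incident he'.1 hve' (Or.inl rfl))
  have hadd := freedom_union_add A (C \ A)
  rw [Set.union_sdiff_cancel (Set.sep_subset C _), hdisj, Set.inter_sdiff_self,
    Set.ncard_empty, Set.ncard_empty, Nat.cast_zero, mul_zero, sub_zero, add_zero] at hadd
  have hA : 3 ≤ M.freedom A :=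
    hC.three_le_freedom ⟨Set.sep_subset C _, fun h => heyA.2 (h heyA.1)⟩ ⟨ex, hexA⟩
  have hB : 3 ≤ M.freedom (C \ A) :=
    hC.three_le_freedom ⟨Set.sdiff_subset, fun h => (h hexA.1).2 hexA⟩ ⟨ey, heyA⟩
  linarith [hC.freedom_le_two]

lemma LamanCircuit.two_le_freedom (hC : M.LamanCircuit C) (hloop : ∀ e ∈ C, ¬ M.IsLoop e) :
    ∀ F ⊆ C, F.Nonempty → 2 ≤ M.freedom F := by
  intro F hF hne
  obtain hFC | rfl := hF.ssubset_or_eq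
  · linarith [hC.three_le_freedom hFC hne]
  obtain ⟨e, he⟩ := hne
  rcases (F \ {e}).eq_empty_or_nonempty with h | h
  · have hsingle : F = {e} :=
      (Set.sdiff_eq_empty.mp h).antisymm (Set.singleton_subset_iff.mpr he)
    have := hC.freedom_le_two
    rw [hsingle, freedom_singleton (hloop e he)] at this
    norm_num at this
  · have h3 := hC.three_le_freedom (Set.sdiff_singleton_ssubset.mpr he) h
    have hE := Set.ncard_sdiff_singleton_add_one he
    have hV := Set.ncard_le_ncard (uverts_mono (Set.sdiff_subset : F \ {e} ⊆ F))
    unfold freedom at *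
    omega

end Finite

variable (M) in
def IsAutomorphism (φV : M.V ≃ M.V) (φE : M.E ≃ M.E) : Prop :=
  ∀ e, M.fst (φE e) = φV (M.fst e) ∧ M.snd (φE e) = φV (M.snd e)

namespace IsAutomorphism

variable {φV : M.V ≃ M.V} {φE : M.E ≃ M.E} (hφ : M.IsAutomorphism φV φE)
include hφ

lemma uverts_image (A : Set M.E) : M.uverts (φE '' A) = φV '' M.uverts A := by
  ext v
  constructor
  · rintro ⟨_, ⟨e, he, rfl⟩, rfl | rfl⟩
    exacts [⟨_, ⟨e, he, Or.inl rfl⟩, (hφ e).1.symm⟩, ⟨_, ⟨e, he, Or.inr rfl⟩, (hφ e).2.symm⟩]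
  · rintro ⟨_, ⟨e, he, rfl | rfl⟩, rfl⟩
    exacts [⟨_, ⟨e, he, rfl⟩, Or.inl (hφ e).1⟩, ⟨_, ⟨e, he, rfl⟩, Or.inr (hφ e).2⟩]

lemma freedom_image (A : Set M.E) : M.freedom (φE '' A) = M.freedom A := by
  rw [freedom, freedom, hφ.uverts_image, Set.ncard_image_of_injective _ φV.injective,
    Set.ncard_image_of_injective _ φE.injective]

lemma reaches_image {A : Set M.E} {u w : M.V} (h : M.Reaches A u w) :
    M.Reaches (φE '' A) (φV u) (φV w) := by
  induction h with
  | refl => exact .refl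
  | tail _ hstep ih =>
    obtain ⟨e, he, ⟨rfl, rfl⟩ | ⟨rfl, rfl⟩⟩ := hstep
    · exact ih.tail ⟨φE e, ⟨e, he, rfl⟩, Or.inl ⟨(hφ e).1, (hφ e).2⟩⟩
    · exact ih.tail ⟨φE e, ⟨e, he, rfl⟩, Or.inr ⟨(hφ e).1, (hφ e).2⟩⟩

lemma connectedOn_image {A : Set M.E} (h : M.ConnectedOn A) : M.ConnectedOn (φE '' A) := by
  rw [ConnectedOn, hφ.uverts_image]
  rintro _ ⟨u, hu, rfl⟩ _ ⟨w, hw, rfl⟩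
  exact hφ.reaches_image (h u hu w hw)

end IsAutomorphism

end UMG

lemma ncard_eq_ncard_mul_card_of_forall_mem_iff {A Γ : Type*} [AddCommGroup Γ]
    {X : Set (A × Γ)} {P : Set A} {K : AddSubgroup Γ} (t : A → Γ)
    (hX : ∀ x, x ∈ X ↔ x.1 ∈ P ∧ x.2 - t x.1 ∈ K) : X.ncard = P.ncard * Nat.card K := by
  rw [← Nat.card_coe_set_eq, ← Nat.card_coe_set_eq, ← Nat.card_prod]
  exact Nat.card_congr
    { toFun := fun x => (⟨x.1.1, ((hX x).1 x.2).1⟩, ⟨x.1.2 - t x.1.1, ((hX x).1 x.2).2⟩)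
      invFun := fun y => ⟨(y.1.1, y.2.1 + t y.1.1), (hX _).2 ⟨y.1.2, by simp⟩⟩
      left_inv := fun x => by ext <;> simp
      right_inv := fun y => by ext <;> simp }

namespace CMG

variable {Γ : Type} [AddCommGroup Γ] {G : CMG Γ} {F : Set G.E} {v₀ : G.V} {δ₀ : Γ}

instance [Finite Γ] : Finite G.liftU.V := inferInstanceAs (Finite (G.V × Γ))

instance [Finite Γ] : Finite G.liftU.E := inferInstanceAs (Finite (G.E × Γ))

variable (G) in
/-- The vertex set of the component of `(v₀, δ₀)` in the lift of `F`, described through walks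
in `F`. -/
def compV (F : Set G.E) (v₀ : G.V) (δ₀ : Γ) : Set G.liftU.V :=
  {x | G.Walk F v₀ x.1 (x.2 - δ₀)}

variable (G) in
def compE (F : Set G.E) (v₀ : G.V) (δ₀ : Γ) : Set G.liftU.E :=
  {ε | ε.1 ∈ F ∧ G.liftU.fst ε ∈ G.compV F v₀ δ₀}

lemma base_mem_compV : ((v₀, δ₀) : G.liftU.V) ∈ G.compV F v₀ δ₀ :=
  (Walk.nil v₀).cast (sub_self δ₀).symm

lemma snd_mem_compV_iff {ε : G.liftU.E} (hε : ε.1 ∈ F) :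
    G.liftU.snd ε ∈ G.compV F v₀ δ₀ ↔ G.liftU.fst ε ∈ G.compV F v₀ δ₀ := by
  show G.Walk F v₀ (G.dst ε.1) (G.color ε.1 + ε.2 - δ₀) ↔ G.Walk F v₀ (G.src ε.1) (ε.2 - δ₀)
  exact ⟨fun h => (h.append (Walk.edge_rev hε)).cast (by abel),
    fun h => (h.append (Walk.edge hε)).cast (by abel)⟩

lemma snd_mem_compV {ε : G.liftU.E} (h : ε ∈ G.compE F v₀ δ₀) :
    G.liftU.snd ε ∈ G.compV F v₀ δ₀ :=
  (snd_mem_compV_iff h.1).2 h.2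

lemma mem_compV_of_reaches {A : Set G.liftU.E} (hA : A ⊆ G.liftEdges F) {x y : G.liftU.V}
    (h : G.liftU.Reaches A x y) (hx : x ∈ G.compV F v₀ δ₀) : y ∈ G.compV F v₀ δ₀ := by
  induction h with
  | refl => exact hx
  | tail _ hstep ih =>
    obtain ⟨ε, hε, ⟨rfl, rfl⟩ | ⟨rfl, rfl⟩⟩ := hstep
    exacts [(snd_mem_compV_iff (hA hε)).2 ih, (snd_mem_compV_iff (hA hε)).1 ih]

lemma reaches_compE {x : G.liftU.V} (hx : x ∈ G.compV F v₀ δ₀) :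
    G.liftU.Reaches (G.compE F v₀ δ₀) (v₀, δ₀) x := by
  suffices h : ∀ {u w : G.V} {γ : Γ}, G.Walk F u w γ → ∀ δ : Γ,
      ((u, δ) : G.liftU.V) ∈ G.compV F v₀ δ₀ →
      G.liftU.Reaches (G.compE F v₀ δ₀) (u, δ) (w, δ + γ) by
    have := h hx δ₀ base_mem_compV
    rwa [add_sub_cancel] at this
  intro u w γ hw
  induction hw with
  | nil v =>
    intro δ _
    rw [add_zero]
    exact .refl
  | @fwd x γ e he _ ih =>
    intro δ hδ
    have hε : ((e, δ) : G.liftU.E) ∈ G.compE F v₀ δ₀ := ⟨he, hδ⟩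
    have := ih (G.color e + δ) (snd_mem_compV hε)
    rw [show δ + (G.color e + γ) = G.color e + δ + γ by abel]
    exact .head ⟨_, hε, Or.inl ⟨rfl, rfl⟩⟩ this
  | @bwd x γ e he _ ih =>
    intro δ hδ
    have hsnd : G.liftU.snd ((e, δ - G.color e) : G.liftU.E) = (G.dst e, δ) :=
      Prod.ext rfl (add_sub_cancel _ _)
    have hε : ((e, δ - G.color e) : G.liftU.E) ∈ G.compE F v₀ δ₀ :=
      ⟨he, (snd_mem_compV_iff he).1 (by rw [hsnd]; exact hδ)⟩
    have := ih (δ - G.color e) hε.2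
    rw [show δ + (-G.color e + γ) = δ - G.color e + γ by abel]
    exact .head ⟨_, hε, Or.inr ⟨rfl, hsnd⟩⟩ this

lemma uverts_compE_subset : G.liftU.uverts (G.compE F v₀ δ₀) ⊆ G.compV F v₀ δ₀ := by
  rintro _ ⟨ε, hε, rfl | rfl⟩
  exacts [hε.2, snd_mem_compV hε]

lemma connectedOn_compE : G.liftU.ConnectedOn (G.compE F v₀ δ₀) := fun _ hx _ hy =>
  (reaches_compE (uverts_compE_subset hx)).symm.trans (reaches_compE (uverts_compE_subset hy))

lemma uverts_compE (hv₀ : v₀ ∈ G.vertsIn F) :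
    G.liftU.uverts (G.compE F v₀ δ₀) = G.compV F v₀ δ₀ := by
  refine uverts_compE_subset.antisymm fun x hx => ?_
  have hx₁ : x.1 ∈ G.vertsIn F := (Walk.eq_or_mem_vertsIn hx).elim (· ▸ hv₀) id
  obtain ⟨e, he, hsrc | hdst⟩ := hx₁
  · refine ⟨(e, x.2), ⟨he, ?_⟩, Or.inl (Prod.ext hsrc rfl)⟩
    show G.Walk F v₀ (G.src e) (x.2 - δ₀)
    rw [hsrc]
    exact hx
  · have hsnd : G.liftU.snd ((e, x.2 - G.color e) : G.liftU.E) = x :=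
      Prod.ext hdst (add_sub_cancel _ _)
    exact ⟨_, ⟨he, (snd_mem_compV_iff he).1 (by rw [hsnd]; exact hx)⟩, Or.inr hsnd⟩

lemma compE_nonempty (hv₀ : v₀ ∈ G.vertsIn F) : (G.compE F v₀ δ₀).Nonempty := by
  obtain ⟨ε, hε, -⟩ : ((v₀, δ₀) : G.liftU.V) ∈ G.liftU.uverts (G.compE F v₀ δ₀) :=
    (uverts_compE hv₀).symm ▸ base_mem_compV
  exact ⟨ε, hε⟩

lemma subset_compE_of_connectedOn {A : Set G.liftU.E} (hA : A ⊆ G.liftEdges F)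
    (hconn : G.liftU.ConnectedOn A) {ε : G.liftU.E} (hε : ε ∈ A) (hεW : ε ∈ G.compE F v₀ δ₀) :
    A ⊆ G.compE F v₀ δ₀ := fun ε' hε' =>
  ⟨hA hε', mem_compV_of_reaches hA (hconn _ ⟨ε, hε, Or.inl rfl⟩ _ ⟨ε', hε', Or.inl rfl⟩) hεW.2⟩

variable (F v₀) in
lemma exists_walk_gain_fun : ∃ α : G.V → Γ, ∀ w ∈ G.comp F v₀, G.Walk F v₀ w (α w) := by
  have : ∀ w, ∃ α, w ∈ G.comp F v₀ → G.Walk F v₀ w α := fun w => by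
    by_cases h : w ∈ G.comp F v₀
    · exact h.imp fun _ hα _ => hα
    · exact ⟨0, fun h' => absurd h' h⟩
  choose α hα using this
  exact ⟨α, hα⟩

lemma ncard_compV :
    (G.compV F v₀ δ₀).ncard = (G.comp F v₀).ncard * Nat.card (G.gainGroup F v₀) := by
  obtain ⟨α, hα⟩ := exists_walk_gain_fun F v₀
  refine ncard_eq_ncard_mul_card_of_forall_mem_iff (fun w => δ₀ + α w) fun x => ?_
  rw [← sub_sub]
  exact ⟨fun h => ⟨⟨_, h⟩, (walk_iff_sub_mem_gainGroup (hα _ ⟨_, h⟩)).1 h⟩,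
    fun ⟨hx, h⟩ => (walk_iff_sub_mem_gainGroup (hα _ hx)).2 h⟩

lemma ncard_compE (hconn : G.IsConnectedFrom F v₀) :
    (G.compE F v₀ δ₀).ncard = F.ncard * Nat.card (G.gainGroup F v₀) := by
  obtain ⟨α, hα⟩ := exists_walk_gain_fun F v₀
  refine ncard_eq_ncard_mul_card_of_forall_mem_iff (fun e => δ₀ + α (G.src e)) fun ε => ?_
  rw [← sub_sub]
  exact and_congr_right fun he => walk_iff_sub_mem_gainGroup (hα _ (hconn _ he))

/-- The lift of a connected edge set with gain group `K` consists of `|Γ / K|` copies of one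
component, which covers `F` with `|K|` sheets. -/
lemma freedom_compE (hv₀ : v₀ ∈ G.vertsIn F) (hconn : G.IsConnectedFrom F v₀) :
    G.liftU.freedom (G.compE F v₀ δ₀) = Nat.card (G.gainGroup F v₀) * G.freedom F := by
  rw [UMG.freedom, freedom, uverts_compE hv₀, ncard_compV, ncard_compE hconn,
    comp_eq_vertsIn hv₀ hconn]
  push_cast
  ring

variable (G) in
def liftShiftV (g : Γ) : G.liftU.V ≃ G.liftU.V := (Equiv.refl G.V).prodCongr (Equiv.addRight g)

variable (G) in
def liftShiftE (g : Γ) : G.liftU.E ≃ G.liftU.E := (Equiv.refl G.E).prodCongr (Equiv.addRight g)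

lemma isAutomorphism_liftShift (g : Γ) :
    G.liftU.IsAutomorphism (G.liftShiftV g) (G.liftShiftE g) :=
  fun _ => ⟨rfl, Prod.ext rfl (add_assoc _ _ _).symm⟩

lemma mem_compE_fst_image {C : Set G.liftU.E} {ε₀ : G.liftU.E} (hε₀ : ε₀ ∈ C) :
    ε₀ ∈ G.compE (Prod.fst '' C) (G.src ε₀.1) ε₀.2 :=
  ⟨⟨ε₀, hε₀, rfl⟩, base_mem_compV⟩

lemma subset_liftEdges_fst_image (C : Set G.liftU.E) : C ⊆ G.liftEdges (Prod.fst '' C) :=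
  fun ε hε => ⟨ε, hε, rfl⟩

lemma isConnectedFrom_fst_image {C : Set G.liftU.E} (hconn : G.liftU.ConnectedOn C)
    {ε₀ : G.liftU.E} (hε₀ : ε₀ ∈ C) : G.IsConnectedFrom (Prod.fst '' C) (G.src ε₀.1) := by
  rintro _ ⟨ε, hε, rfl⟩
  exact ⟨_, (subset_compE_of_connectedOn (subset_liftEdges_fst_image C) hconn hε₀
    (mem_compE_fst_image hε₀) hε).2⟩

/-- The lift component containing a connected `(2,2)`-tight edge set `C` is the union of the
translates of `C` that it contains. -/
theorem freedom_compE_fst_image_le_two [Finite Γ] {C : Set G.liftU.E}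
    (hconn : G.liftU.ConnectedOn C) (hsparse : ∀ F ⊆ C, F.Nonempty → 2 ≤ G.liftU.freedom F)
    (htight : G.liftU.freedom C ≤ 2) {ε₀ : G.liftU.E} (hε₀ : ε₀ ∈ C) :
    G.liftU.freedom (G.compE (Prod.fst '' C) (G.src ε₀.1) ε₀.2) ≤ 2 := by
  set W := G.compE (Prod.fst '' C) (G.src ε₀.1) ε₀.2
  have hlift : ∀ g, G.liftShiftE g '' C ⊆ G.liftEdges (Prod.fst '' C) := by
    rintro g _ ⟨ε, hε, rfl⟩
    exact ⟨ε, hε, rfl⟩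
  have hsub : ∀ g, ∀ ε ∈ G.liftShiftE g '' C, ε ∈ W → G.liftShiftE g '' C ⊆ W :=
    fun g _ hε hεW => subset_compE_of_connectedOn (hlift g)
      ((isAutomorphism_liftShift g).connectedOn_image hconn) hε hεW
  have hW : W = ⋃ g ∈ {g | G.liftShiftE g '' C ⊆ W}, G.liftShiftE g '' C := by
    refine subset_antisymm (fun ε hε => ?_) (Set.iUnion₂_subset fun g hg => hg)
    obtain ⟨ε', hε', hfst⟩ := hε.1
    have hmem : ε ∈ G.liftShiftE (ε.2 - ε'.2) '' C :=
      ⟨ε', hε', Prod.ext hfst (add_sub_cancel _ _)⟩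
    exact Set.mem_biUnion (hsub _ ε hmem hε) hmem
  have h0 : G.liftShiftE 0 ε₀ = ε₀ := Prod.ext rfl (add_zero _)
  rw [hW]
  refine UMG.freedom_biUnion_le
    ⟨0, hsub 0 ε₀ ⟨ε₀, hε₀, h0⟩ (mem_compE_fst_image hε₀)⟩
    (fun g _ => ⟨_, ε₀, hε₀, rfl⟩) (fun g _ F hF hne => ?_)
    (fun g _ => (isAutomorphism_liftShift g).freedom_image C ▸ htight) (hW ▸ connectedOn_compE)
  have := hsparse _ ((Equiv.symm_image_subset _ _ _).2 hF) (hne.image _)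
  rwa [← (isAutomorphism_liftShift g).freedom_image, Equiv.image_symm_image] at this

lemma Walk.gain_eq_zero_of_color_eq_zero {e : G.E} (hc : G.color e = 0)
    {u w : G.V} {γ : Γ} (h : G.Walk {e} u w γ) : γ = 0 := by
  induction h with
  | nil v => rfl
  | fwd e' he' _ ih => rw [Set.mem_singleton_iff.mp he', hc, ih, add_zero]
  | bwd e' he' _ ih => rw [Set.mem_singleton_iff.mp he', hc, ih, neg_zero, add_zero]

/-- A loop of the lift lies over a loop of color `0`, which violates the cone-Laman count. -/
lemma not_isLoop_liftU [Finite Γ] (hs : G.IsConeLamanSparse) (ε : G.liftU.E) :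
    ¬ G.liftU.IsLoop ε := by
  intro h
  obtain ⟨hloop, hc⟩ := Prod.mk.inj h
  have hc : G.color ε.1 = 0 := by simpa using hc.symm
  set e := ε.1
  have hv : G.src e ∈ G.vertsIn {e} := ⟨e, rfl, Or.inl rfl⟩
  have hconn : G.IsConnectedFrom {e} (G.src e) := by
    rintro _ rfl
    exact Reaches.refl _ _
  have hbot : G.gainGroup {e} (G.src e) = ⊥ :=
    (AddSubgroup.eq_bot_iff_forall _).2 fun _ hγ =>
      Walk.gain_eq_zero_of_color_eq_zero hc (mem_gainGroup.1 hγ)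
  have hverts : G.vertsIn {e} = {G.src e} := by
    ext v
    simp [vertsIn, Incident, hloop, eq_comm]
  have hrank : subgroupRank (G.gainGroup {e} (G.src e)) ≤ 2 := by
    rw [subgroupRank_eq_zero_iff.2 hbot]
    norm_num
  have := (hs {e}).le_freedom_of_isConnectedFrom hrank hv hconn
  simp [hbot, freedom, hverts] at this

theorem lamanSparse_liftU_of_isConeLamanSparse [Finite Γ] (hodd : Odd (Nat.card Γ))
    (hrank : ∀ K : AddSubgroup Γ, subgroupRank K ≤ 2) (hs : G.IsConeLamanSparse) :
    G.liftU.LamanSparse := by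
  by_contra hnot
  obtain ⟨C, hC⟩ := UMG.exists_lamanCircuit hnot
  obtain ⟨ε₀, hε₀⟩ := hC.1.2.1
  have hconn := isConnectedFrom_fst_image hC.connectedOn hε₀
  have hv₀ : G.src ε₀.1 ∈ G.vertsIn (Prod.fst '' C) := ⟨ε₀.1, ⟨ε₀, hε₀, rfl⟩, Or.inl rfl⟩
  have hW := freedom_compE_fst_image_le_two hC.connectedOn
    (hC.two_le_freedom fun ε _ => not_isLoop_liftU hs ε) hC.freedom_le_two hε₀
  rw [freedom_compE hv₀ hconn] at hW
  have hF := (hs _).le_freedom_of_isConnectedFrom (hrank _) hv₀ hconn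
  split_ifs at hF with hK
  · rw [hK, AddSubgroup.card_bot, Nat.cast_one, one_mul] at hW
    linarith
  · have := three_le_card_of_ne_bot hodd hK
    nlinarith

theorem isConeLamanSparse_of_lamanSparse_liftU [Finite Γ] (hl : G.liftU.LamanSparse) :
    G.IsConeLamanSparse := by
  refine isConeLamanSparse_of_forall_isConnectedFrom fun F v₀ hv₀ hconn => ?_
  have hW := UMG.three_le_freedom_iff.2 (hl _ (Set.toFinite _) (compE_nonempty (δ₀ := 0) hv₀))
  rw [freedom_compE hv₀ hconn] at hW
  refine coneLamanCount_of_isConnectedFrom hv₀ hconn ?_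
  split_ifs with hK
  · rwa [hK, AddSubgroup.card_bot, Nat.cast_one, one_mul] at hW
  · have : 0 < Nat.card (G.gainGroup F v₀) := Nat.card_pos
    nlinarith

theorem isConeLamanSparse_iff_lamanSparse_liftU [Finite Γ] (hodd : Odd (Nat.card Γ))
    (hrank : ∀ K : AddSubgroup Γ, subgroupRank K ≤ 2) :
    G.IsConeLamanSparse ↔ G.liftU.LamanSparse :=
  ⟨lamanSparse_liftU_of_isConeLamanSparse hodd hrank, isConeLamanSparse_of_lamanSparse_liftU⟩

lemma one_le_compCount {F : Set G.E} {v : G.V} (hv : v ∈ G.vertsIn F) :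
    1 ≤ G.compCount F (subgroupRank (G.gainGroup F v)) :=
  (Set.ncard_pos (Set.toFinite _)).2 ⟨_, v, hv, rfl, rfl⟩

lemma compCountTop_eq_compCount_univ (h : G.vertsIn Set.univ = Set.univ) (i : ℕ) :
    G.compCountTop i = G.compCount Set.univ i := by
  simp [compCountTop, compCount, h]

/-- With `m = 2n - 1`, the count on the whole graph forces a single component, of positive
ρ-rank, spanning all vertices; so it holds with equality. -/
theorem isConeLaman_iff_isConeLamanSparse (hrank : ∀ K : AddSubgroup Γ, subgroupRank K ≤ 2)
    (hcard : (Nat.card G.E : ℤ) = 2 * Nat.card G.V - 1) :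
    G.IsConeLaman ↔ G.IsConeLamanSparse := by
  refine ⟨And.left, fun hs => ⟨hs, ?_⟩⟩
  obtain ⟨e₀⟩ : Nonempty G.E := (Nat.card_pos_iff.1 (by omega)).1
  have hcomp := one_le_compCount (⟨e₀, trivial, Or.inl rfl⟩ : G.src e₀ ∈ G.vertsIn Set.univ)
  have hr := hrank (G.gainGroup Set.univ (G.src e₀))
  have hcount := hs Set.univ
  have hn := Set.ncard_le_ncard (Set.subset_univ (G.vertsIn Set.univ))
  rw [ConeLamanCount, Set.ncard_univ] at hcount
  rw [Set.ncard_univ] at hn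
  have hone : 1 ≤ G.compCount Set.univ 0 + G.compCount Set.univ 1 + G.compCount Set.univ 2 := by
    interval_cases subgroupRank (G.gainGroup Set.univ (G.src e₀)) <;> omega
  have hall : G.vertsIn Set.univ = Set.univ :=
    Set.eq_of_subset_of_ncard_le (Set.subset_univ _) (by rw [Set.ncard_univ]; omega)
  simp only [compCountTop_eq_compCount_univ hall]
  omega

end CMG

/-- Let `p` and `q` be distinct odd primes and `(G,γ)` a
`(ℤ/pℤ × ℤ/qℤ)`-colored graph with `n` vertices and `2n - 1` edges.  Then
`(G,γ)` is a cone-Laman graph if and only if its symmetric lift is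
Laman-sparse. -/
theorem coneLaman_iff_lift_lamanSparse_pq (p q : ℕ)
    (hp : p.Prime) (hq : q.Prime) (hop : Odd p) (hoq : Odd q) (hpq : p ≠ q)
    (G : CMG (ZMod p × ZMod q))
    (hcard : (Nat.card G.E : ℤ) = 2 * Nat.card G.V - 1) :
    G.IsConeLaman ↔ (CMG.liftU G).LamanSparse := by
  have : NeZero p := ⟨hp.ne_zero⟩
  have : NeZero q := ⟨hq.ne_zero⟩
  have : IsAddCyclic (ZMod p × ZMod q) := by
    rw [AddGroup.isAddCyclic_prod_iff, Nat.card_zmod, Nat.card_zmod]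
    exact ⟨inferInstance, inferInstance, (Nat.coprime_primes hp hq).2 hpq⟩
  have hrank (K : AddSubgroup (ZMod p × ZMod q)) : subgroupRank K ≤ 2 :=
    (subgroupRank_le_one K).trans one_le_two
  have hodd : Odd (Nat.card (ZMod p × ZMod q)) := by
    rw [Nat.card_prod, Nat.card_zmod, Nat.card_zmod]
    exact hop.mul hoq
  rw [G.isConeLaman_iff_isConeLamanSparse hrank hcard]
  exact G.isConeLamanSparse_iff_lamanSparse_liftU hodd hrank
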